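/- Let (X,d) be a complete metric space, n ≥ 1, and c ∈ [0,1). For each j ∈ ℕ and each i ∈ {1,…,n}, let f_{i,j} : X → X and f_i : X → X be maps satisfying d(f_{i,j}(x), f_{i,j}(y)) ≤ c·d(x,y) and d(f_i(x), f_i(y)) ≤ c·d(x,y) for all x,y ∈ X. Suppose that for each i, d̄∞(f_{i,j}, f_i) → 0 as j → ∞. Let A_j and A be nonempty compact subsets of X satisfying A_j = ⋃_{i=1}^{n} f_{i,j}(A_j) for every j and A = ⋃_{i=1}^{n} f_i(A) (i.e., A_j and A are the attractors of the respective iterated function systems). Then A_j → A in the Hausdorff metric, i.e., the Hausdorff distance between A_j and A tends to 0 as j → ∞. -/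

import Mathlib

/-!
If each `f j i` is uniformly `δ`-close to `F i` and the `F i` are `c`-Lipschitz,
the two self-similarity equations give `h(A j, B) ≤ δ + c · h(A j, B)`,
i.e. `h(A j, B) ≤ δ / (1 - c)`.
Convergence in `dbar` is uniform convergence, so `δ` can be taken to tend to `0` with `j`.
-/

noncomputable def dbar {X : Type*} [MetricSpace X] (f g : X → X) : ℝ :=
  ⨆ x : X, dist (f x) (g x) / (1 + dist (f x) (g x))

open Metric Set Filter Topology NNReal

section Hausdorff

variable {X : Type*} [MetricSpace X]

theorem exists_dist_le_hausdorffDist_of_mem {s t : Set X} {x : X} (ht : IsCompact t)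
    (hx : x ∈ s) (fin : hausdorffEDist s t ≠ ⊤) :
    ∃ y ∈ t, dist x y ≤ hausdorffDist s t := by
  obtain ⟨y, hy, hxy⟩ :=
    ht.exists_infDist_eq_dist (nonempty_of_hausdorffEDist_ne_top ⟨x, hx⟩ fin) x
  exact ⟨y, hy, hxy ▸ infDist_le_hausdorffDist_of_mem hx fin⟩

variable {ι : Type*} {s t : Set X} {g G : ι → X → X} {K : ℝ≥0} {δ : ℝ}

theorem hausdorffDist_le_add_mul_of_eq_iUnion_image (hs : IsCompact s) (hs' : s.Nonempty)
    (ht : IsCompact t) (ht' : t.Nonempty) (hsg : s = ⋃ i, g i '' s) (htG : t = ⋃ i, G i '' t)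
    (hG : ∀ i, LipschitzWith K (G i)) (hδ : ∀ i x, dist (g i x) (G i x) ≤ δ) :
    hausdorffDist s t ≤ δ + K * hausdorffDist s t := by
  have fin : hausdorffEDist s t ≠ ⊤ :=
    hausdorffEDist_ne_top_of_nonempty_of_bounded hs' ht' hs.isBounded ht.isBounded
  have hδ0 : 0 ≤ δ := by
    obtain ⟨a, ha⟩ := hs'
    rw [hsg, mem_iUnion] at ha
    obtain ⟨i, -⟩ := ha
    exact dist_nonneg.trans (hδ i a)
  refine hausdorffDist_le_of_mem_dist (add_nonneg hδ0 (mul_nonneg K.2 hausdorffDist_nonneg)) ?_ ?_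
  · intro x hx
    rw [hsg] at hx
    obtain ⟨i, a, ha, rfl⟩ := mem_iUnion.mp hx
    obtain ⟨b, hb, hab⟩ := exists_dist_le_hausdorffDist_of_mem ht ha fin
    refine ⟨G i b, htG ▸ mem_iUnion.mpr ⟨i, b, hb, rfl⟩, ?_⟩
    calc dist (g i a) (G i b) ≤ dist (g i a) (G i a) + dist (G i a) (G i b) := dist_triangle _ _ _
      _ ≤ δ + K * hausdorffDist s t := by
        gcongr
        · exact hδ i a
        · exact (hG i).dist_le_mul_of_le hab
  · intro y hy
    rw [htG] at hy
    obtain ⟨i, b, hb, rfl⟩ := mem_iUnion.mp hy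
    obtain ⟨a, ha, hba⟩ := exists_dist_le_hausdorffDist_of_mem hs hb
      (hausdorffEDist_comm (s := s) ▸ fin)
    refine ⟨g i a, hsg ▸ mem_iUnion.mpr ⟨i, a, ha, rfl⟩, ?_⟩
    calc dist (G i b) (g i a) ≤ dist (G i b) (G i a) + dist (G i a) (g i a) := dist_triangle _ _ _
      _ ≤ K * hausdorffDist s t + δ := by
        gcongr
        · exact (hG i).dist_le_mul_of_le (hausdorffDist_comm (s := s) ▸ hba)
        · exact dist_comm (g i a) (G i a) ▸ hδ i a
      _ = δ + K * hausdorffDist s t := add_comm _ _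

theorem hausdorffDist_le_div_of_eq_iUnion_image (hs : IsCompact s) (hs' : s.Nonempty)
    (ht : IsCompact t) (ht' : t.Nonempty) (hsg : s = ⋃ i, g i '' s) (htG : t = ⋃ i, G i '' t)
    (hG : ∀ i, LipschitzWith K (G i)) (hδ : ∀ i x, dist (g i x) (G i x) ≤ δ) (hK : K < 1) :
    hausdorffDist s t ≤ δ / (1 - K) := by
  have h := hausdorffDist_le_add_mul_of_eq_iUnion_image hs hs' ht ht' hsg htG hG hδ
  rw [le_div_iff₀ (sub_pos.mpr (mod_cast hK))]
  linarith

end Hausdorff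

section Dbar

variable {X : Type*} [MetricSpace X]

theorem dbar_nonneg (f g : X → X) : 0 ≤ dbar f g :=
  Real.iSup_nonneg fun _ => by positivity

theorem dist_le_div_of_dbar_le {f g : X → X} {D : ℝ} (h : dbar f g ≤ D) (hD : D < 1) (x : X) :
    dist (f x) (g x) ≤ D / (1 - D) := by
  have hbdd : BddAbove (range fun y => dist (f y) (g y) / (1 + dist (f y) (g y))) := by
    refine ⟨1, ?_⟩
    rintro _ ⟨y, rfl⟩
    exact div_le_one_of_le₀ (by linarith) (by positivity)
  have hx : dist (f x) (g x) / (1 + dist (f x) (g x)) ≤ D := (le_ciSup hbdd x).trans h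
  rw [div_le_iff₀ (by positivity)] at hx
  rw [le_div_iff₀ (by linarith)]
  linarith

end Dbar

theorem stmt_10_general {X : Type*} [MetricSpace X]
    {n : ℕ} (c : ℝ) (hc0 : 0 ≤ c) (hc1 : c < 1)
    (f : ℕ → Fin n → X → X) (F : Fin n → X → X)
    (hFcontr : ∀ i, ∀ x y : X, dist (F i x) (F i y) ≤ c * dist x y)
    (hconv : ∀ i, Filter.Tendsto (fun j => dbar (f j i) (F i)) Filter.atTop (nhds 0))
    (A : ℕ → Set X) (B : Set X)
    (hAcpt : ∀ j, IsCompact (A j)) (hAne : ∀ j, (A j).Nonempty)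
    (hBcpt : IsCompact B) (hBne : B.Nonempty)
    (hAattr : ∀ j, A j = ⋃ i : Fin n, (f j i) '' (A j))
    (hBattr : B = ⋃ i : Fin n, (F i) '' B) :
    Filter.Tendsto (fun j => Metric.hausdorffDist (A j) B) Filter.atTop (nhds 0) := by
  set D : ℕ → ℝ := fun j => ∑ i, dbar (f j i) (F i)
  have hD : Tendsto D atTop (𝓝 0) := by
    simpa using tendsto_finsetSum Finset.univ fun i _ => hconv i
  have hbound : ∀ᶠ j in atTop, hausdorffDist (A j) B ≤ D j / (1 - D j) / (1 - c) := by
    filter_upwards [hD.eventually_lt_const one_pos] with j hj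
    refine hausdorffDist_le_div_of_eq_iUnion_image (K := ⟨c, hc0⟩) (hAcpt j) (hAne j) hBcpt hBne
      (hAattr j) hBattr (fun i => .of_dist_le_mul (hFcontr i))
      (fun i => dist_le_div_of_dbar_le ?_ hj) hc1
    exact Finset.single_le_sum (fun i _ => dbar_nonneg _ _) (Finset.mem_univ i)
  have hlim : Tendsto (fun j => D j / (1 - D j) / (1 - c)) atTop (𝓝 0) := by
    simpa using (hD.div (tendsto_const_nhds.sub hD) (by norm_num)).div_const (1 - c)
  exact tendsto_of_tendsto_of_tendsto_of_le_of_le' tendsto_const_nhds hlim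
    (.of_forall fun _ => hausdorffDist_nonneg) hbound

theorem stmt_10 {X : Type*} [MetricSpace X] [CompleteSpace X]
    {n : ℕ} (hn : 1 ≤ n) (c : ℝ) (hc0 : 0 ≤ c) (hc1 : c < 1)
    (f : ℕ → Fin n → X → X) (F : Fin n → X → X)
    (hfcontr : ∀ j i, ∀ x y : X, dist (f j i x) (f j i y) ≤ c * dist x y)
    (hFcontr : ∀ i, ∀ x y : X, dist (F i x) (F i y) ≤ c * dist x y)
    (hconv : ∀ i, Filter.Tendsto (fun j => dbar (f j i) (F i)) Filter.atTop (nhds 0))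
    (A : ℕ → Set X) (B : Set X)
    (hAcpt : ∀ j, IsCompact (A j)) (hAne : ∀ j, (A j).Nonempty)
    (hBcpt : IsCompact B) (hBne : B.Nonempty)
    (hAattr : ∀ j, A j = ⋃ i : Fin n, (f j i) '' (A j))
    (hBattr : B = ⋃ i : Fin n, (F i) '' B) :
    Filter.Tendsto (fun j => Metric.hausdorffDist (A j) B) Filter.atTop (nhds 0) :=
  stmt_10_general c hc0 hc1 f F hFcontr hconv A B hAcpt hAne hBcpt hBne hAattr hBattr
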